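/- Define a sequence of polynomials A_i ∈ ℕ[x, y, z] by A_0(x, y, z) = x and A_{i+1}(x, y, z) = x + A_i(x² + 2xy + z, x, x³ + x²y). Then for every n ≥ 1 the coefficient of x^n in A_i(x, 0, 0) is eventually constant as i → ∞, and this eventual value equals the number of pairs (T0, T1) of balanced trees with exactly n leaves such that T0 ≼ T1 in the Tamari order (i.e., the number of balanced tree intervals [T0, T1] in the Tamari lattice). -/

import Mathlib

/-- Complete rooted planar binary trees. -/
inductive BTree where
  | leaf : BTree
  | node : BTree → BTree → BTree
  deriving DecidableEq

namespace BTree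

/-- The height of a tree. -/
def ht : BTree → ℕ
  | leaf => 0
  | node l r => 1 + max l.ht r.ht

/-- The imbalance value of the root of a tree (`γ`). -/
def imb : BTree → ℤ
  | leaf => 0
  | node l r => (r.ht : ℤ) - l.ht

/-- A tree is balanced if every node has imbalance value in {-1, 0, 1}. -/
def Balanced : BTree → Prop
  | leaf => True
  | node l r =>
      ((r.ht : ℤ) - l.ht = -1 ∨ (r.ht : ℤ) - l.ht = 0 ∨ (r.ht : ℤ) - l.ht = 1) ∧
      Balanced l ∧ Balanced r

/-- The subtree at a position (`false` = go left, `true` = go right). -/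
def subtreeAt : BTree → List Bool → Option BTree
  | t, [] => some t
  | leaf, _ :: _ => none
  | node l _, false :: p => subtreeAt l p
  | node _ r, true :: p => subtreeAt r p

/-- `p` is the position of an internal node of `t`. -/
def IsNodePos (t : BTree) (p : List Bool) : Prop :=
  ∃ l r, subtreeAt t p = some (node l r)

/-- Right rotation whose root `y` is at position `p`: the subtree
`(A ∧ B) ∧ C` at `p` is replaced by `A ∧ (B ∧ C)`. -/
inductive RotAt : BTree → List Bool → BTree → Prop
  | here (a b c : BTree) : RotAt (node (node a b) c) [] (node a (node b c))
  | left {l l' : BTree} (r : BTree) {p : List Bool} :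
      RotAt l p l' → RotAt (node l r) (false :: p) (node l' r)
  | right (l : BTree) {r r' : BTree} {p : List Bool} :
      RotAt r p r' → RotAt (node l r) (true :: p) (node l r')

/-- `t₁` is obtained from `t₀` by a single right rotation (`t₀ ⋌ t₁`). -/
def Rot (t₀ t₁ : BTree) : Prop := ∃ p, RotAt t₀ p t₁

/-- The Tamari order: reflexive transitive closure of right rotation. -/
def Tamari : BTree → BTree → Prop := Relation.ReflTransGen Rot

/-- Number of leaves. -/
def leaves : BTree → ℕ
  | leaf => 1
  | node l r => l.leaves + r.leaves

open MvPolynomial in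
/-- The sequence of polynomials `A_0(x, y, z) = x`,
`A_{i+1}(x, y, z) = x + A_i(x² + 2xy + z, x, x³ + x²y)`
(variables `0`, `1`, `2` are `x`, `y`, `z`). -/
noncomputable def intSeq : ℕ → MvPolynomial (Fin 3) ℕ
  | 0 => X 0
  | i + 1 =>
      X 0 + bind₁ ![X 0 ^ 2 + 2 * X 0 * X 1 + X 2, X 0, X 0 ^ 3 + X 0 ^ 2 * X 1] (intSeq i)

/-!
Let `t₀ ≼ t₁` be balanced trees with `t₀ = l₀ ∧ r₀`, `t₁ = l₁ ∧ r₁`. Rotations never enlarge the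
left subtree of the root. If `l₀` and `l₁` have the same number of leaves, then `l₀ ≼ l₁` and
`r₀ ≼ r₁`; otherwise the balance conditions force `t₀ = (a₀ ∧ b₀) ∧ c₀`, `t₁ = a₁ ∧ (b₁ ∧ c₁)`
with `a₀ ≼ a₁`, `b₀ ≼ b₁`, `c₀ ≼ c₁` and `ht a = ht c ∈ {ht b, ht b + 1}`. Conversely each pair
built in these two ways is a balanced interval. Grading these intervals by height, their
generating polynomials `x_k` (height `k`), `y_k = x_{k-1}` and `z_k` (height `k + 1`, second shape)
obey `x_{k+1} = x_k² + 2 x_k y_k + z_k`, `y_{k+1} = x_k`, `z_{k+1} = x_k³ + x_k² y_k`, which is the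
substitution defining `A_i`, started at `(x, 0, 0)`. Hence `A_i(x, 0, 0) = x_0 + ⋯ + x_i`, and as a
tree with `n` leaves has height below `n`, the coefficient of `x^n` is the number of balanced
intervals with `n` leaves as soon as `i ≥ n`.
-/

open Relation

theorem one_le_leaves : ∀ t : BTree, 1 ≤ t.leaves
  | leaf => le_rfl
  | node l _ => (one_le_leaves l).trans (Nat.le_add_right _ _)

theorem one_lt_leaves_node (l r : BTree) : 1 < (node l r).leaves :=
  Nat.add_le_add (one_le_leaves l) (one_le_leaves r)

theorem ht_lt_leaves : ∀ t : BTree, t.ht < t.leaves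
  | leaf => Nat.zero_lt_one
  | node l r => by
    have := ht_lt_leaves l
    have := ht_lt_leaves r
    simp only [ht, leaves]
    omega

theorem balanced_node {l r : BTree} :
    Balanced (node l r) ↔ (r.ht ≤ l.ht + 1 ∧ l.ht ≤ r.ht + 1) ∧ Balanced l ∧ Balanced r := by
  simp only [Balanced]
  constructor <;> rintro ⟨h, hl, hr⟩ <;> exact ⟨by omega, hl, hr⟩

theorem RotAt.leaves_eq {t u : BTree} {p : List Bool} (h : RotAt t p u) :
    u.leaves = t.leaves := by
  induction h <;> simp only [leaves] <;> omega

theorem Tamari.leaves_eq {t u : BTree} (h : Tamari t u) : u.leaves = t.leaves := by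
  induction h with
  | refl => rfl
  | tail _ hr ih => obtain ⟨p, hp⟩ := hr; exact hp.leaves_eq.trans ih

def leftLeaves : BTree → ℕ
  | leaf => 0
  | node l _ => l.leaves

theorem Rot.leftLeaves_le {t u : BTree} (h : Rot t u) : u.leftLeaves ≤ t.leftLeaves := by
  obtain ⟨p, hp⟩ := h
  cases hp with
  | here a b c => simp only [leftLeaves, leaves]; omega
  | left r hl => simp only [leftLeaves, hl.leaves_eq, le_rfl]
  | right l hr => exact le_rfl

theorem Tamari.leftLeaves_le {t u : BTree} (h : Tamari t u) : u.leftLeaves ≤ t.leftLeaves := by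
  induction h with
  | refl => exact le_rfl
  | tail _ hr ih => exact hr.leftLeaves_le.trans ih

theorem Tamari.node_congr {l l' r r' : BTree} (hl : Tamari l l') (hr : Tamari r r') :
    Tamari (node l r) (node l' r') :=
  ReflTransGen.trans
    (ReflTransGen.lift (node · r) (fun _ _ ⟨p, hp⟩ => ⟨false :: p, hp.left r⟩) _ _ hl)
    (ReflTransGen.lift (node l' ·) (fun _ _ ⟨p, hp⟩ => ⟨true :: p, hp.right l'⟩) _ _ hr)

theorem Tamari.of_node_node {l₀ r₀ l₁ r₁ : BTree} (h : Tamari (node l₀ r₀) (node l₁ r₁))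
    (hl : l₀.leaves = l₁.leaves) : Tamari l₀ l₁ ∧ Tamari r₀ r₁ := by
  generalize hs : node l₀ r₀ = s at h
  induction h using ReflTransGen.head_induction_on generalizing l₀ r₀ with
  | refl => cases hs; exact ⟨.refl, .refl⟩
  | head hstep hrest ih =>
    subst hs
    obtain ⟨p, hp⟩ := hstep
    cases hp with
    | here a b c =>
      have := Tamari.leftLeaves_le hrest
      have := one_le_leaves b
      simp only [leftLeaves, leaves] at *
      omega
    | left r hl' =>
      obtain ⟨h₁, h₂⟩ := ih (hl'.leaves_eq ▸ hl) rfl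
      exact ⟨.head ⟨_, hl'⟩ h₁, h₂⟩
    | right l hr' =>
      obtain ⟨h₁, h₂⟩ := ih hl rfl
      exact ⟨h₁, .head ⟨_, hr'⟩ h₂⟩

theorem Tamari.exists_of_leftLeaves_lt {l₀ r₀ t : BTree} (h : Tamari (node l₀ r₀) t)
    (hlt : t.leftLeaves < l₀.leaves) :
    ∃ a b c, Tamari l₀ (node a b) ∧ Tamari r₀ c ∧ Tamari (node a (node b c)) t := by
  generalize hs : node l₀ r₀ = s at h
  induction h using ReflTransGen.head_induction_on generalizing l₀ r₀ with
  | refl => subst hs; simp only [leftLeaves] at hlt; omega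
  | head hstep hrest ih =>
    subst hs
    obtain ⟨p, hp⟩ := hstep
    cases hp with
    | here a b c => exact ⟨a, b, r₀, .refl, .refl, hrest⟩
    | left r hl =>
      obtain ⟨a, b, c, h₁, h₂, h₃⟩ := ih (hl.leaves_eq ▸ hlt) rfl
      exact ⟨a, b, c, .head ⟨_, hl⟩ h₁, h₂, h₃⟩
    | right l hr =>
      obtain ⟨a, b, c, h₁, h₂, h₃⟩ := ih hlt rfl
      exact ⟨a, b, c, h₁, .head ⟨_, hr⟩ h₂, h₃⟩

theorem Tamari.middle_of_rotation {a b c a' b' c' : BTree}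
    (h : Tamari (node (node a b) c) (node a' (node b' c')))
    (ha : a.leaves = a'.leaves) (hc : c.leaves = c'.leaves) : Tamari b b' := by
  obtain ⟨p, q, r, hab, hcr, hpqr⟩ := h.exists_of_leftLeaves_lt (by
    have := one_le_leaves b
    simp only [leftLeaves, leaves]
    omega)
  have hp₁ := hab.leftLeaves_le
  have hp₂ := hpqr.leftLeaves_le
  simp only [leftLeaves] at hp₁ hp₂
  obtain ⟨-, hbq⟩ := hab.of_node_node (by omega)
  obtain ⟨-, hqr⟩ := hpqr.of_node_node (by omega)
  have hq := hqr.leaves_eq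
  have := hcr.leaves_eq
  simp only [leaves] at hq
  exact hbq.trans (hqr.of_node_node (by omega)).1

inductive LeftSpine : ℕ → BTree → BTree → Prop
  | refl (t : BTree) : LeftSpine 0 t t
  | step {e : ℕ} {s l : BTree} (r : BTree) : LeftSpine e s l → LeftSpine (e + 1) s (node l r)

inductive RightSpine : ℕ → BTree → BTree → Prop
  | refl (t : BTree) : RightSpine 0 t t
  | step {d : ℕ} {s r : BTree} (l : BTree) : RightSpine d s r → RightSpine (d + 1) s (node l r)

namespace LeftSpine

variable {e : ℕ} {s t : BTree}

theorem ht_add_le (h : LeftSpine e s t) : s.ht + e ≤ t.ht := by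
  induction h with
  | refl => rfl
  | step _ _ ih => simp only [ht]; omega

theorem balanced (h : LeftSpine e s t) (hb : Balanced t) : Balanced s := by
  induction h with
  | refl => exact hb
  | step _ _ ih => exact ih (balanced_node.1 hb).2.1

theorem two_le {l r : BTree} (h : LeftSpine e s (node l r)) (hs : s.leaves < l.leaves) :
    2 ≤ e := by
  rcases h with _ | ⟨_, _ | ⟨_, _⟩⟩
  · simp only [leaves] at hs; omega
  · omega
  · omega

theorem exists_eq_node {l r : BTree} (h : LeftSpine 2 s (node l r)) : ∃ b, l = node s b := by
  rcases h with _ | ⟨_, _ | ⟨b, ⟨⟩⟩⟩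
  exact ⟨b, rfl⟩

end LeftSpine

namespace RightSpine

variable {d : ℕ} {s t : BTree}

theorem ht_add_le (h : RightSpine d s t) : s.ht + d ≤ t.ht := by
  induction h with
  | refl => rfl
  | step _ _ ih => simp only [ht]; omega

theorem balanced (h : RightSpine d s t) (hb : Balanced t) : Balanced s := by
  induction h with
  | refl => exact hb
  | step _ _ ih => exact ih (balanced_node.1 hb).2.2

theorem two_le {l r : BTree} (h : RightSpine d s (node l r)) (hs : s.leaves < r.leaves) :
    2 ≤ d := by
  rcases h with _ | ⟨_, _ | ⟨_, _⟩⟩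
  · simp only [leaves] at hs; omega
  · omega
  · omega

theorem exists_eq_node {l r : BTree} (h : RightSpine 2 s (node l r)) : ∃ b, r = node b s := by
  rcases h with _ | ⟨_, _ | ⟨b, ⟨⟩⟩⟩
  exact ⟨b, rfl⟩

end RightSpine

theorem RotAt.exists_leftSpine {t u : BTree} {p : List Bool} (h : RotAt t p u) {e : ℕ}
    {s : BTree} (hs : LeftSpine e s u) : ∃ e' s', LeftSpine e' s' t ∧ Tamari s' s := by
  induction h generalizing e s with
  | here a b c =>
    rcases hs with _ | ⟨_, hs⟩
    · exact ⟨0, _, .refl _, .single ⟨[], .here a b c⟩⟩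
    · exact ⟨_, s, (hs.step b).step c, .refl⟩
  | left r hl ih =>
    rcases hs with _ | ⟨_, hs⟩
    · exact ⟨0, _, .refl _, .single ⟨_, hl.left r⟩⟩
    · obtain ⟨e', s', hs', hss'⟩ := ih hs
      exact ⟨_, s', hs'.step r, hss'⟩
  | right l hr =>
    rcases hs with _ | ⟨_, hs⟩
    · exact ⟨0, _, .refl _, .single ⟨_, hr.right l⟩⟩
    · exact ⟨_, s, hs.step _, .refl⟩

theorem RotAt.exists_rightSpine {t u : BTree} {p : List Bool} (h : RotAt t p u) {d : ℕ}
    {s : BTree} (hs : RightSpine d s t) : ∃ d' s', RightSpine d' s' u ∧ Tamari s s' := by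
  induction h generalizing d s with
  | here a b c =>
    rcases hs with _ | ⟨_, hs⟩
    · exact ⟨0, _, .refl _, .single ⟨[], .here a b c⟩⟩
    · exact ⟨_, s, (hs.step b).step a, .refl⟩
  | left r hl =>
    rcases hs with _ | ⟨_, hs⟩
    · exact ⟨0, _, .refl _, .single ⟨_, hl.left r⟩⟩
    · exact ⟨_, s, hs.step _, .refl⟩
  | right l hr ih =>
    rcases hs with _ | ⟨_, hs⟩
    · exact ⟨0, _, .refl _, .single ⟨_, hr.right l⟩⟩
    · obtain ⟨d', s', hs', hss'⟩ := ih hs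
      exact ⟨_, s', hs'.step l, hss'⟩

theorem Tamari.exists_leftSpine {t u : BTree} (h : Tamari t u) {e : ℕ} {s : BTree}
    (hs : LeftSpine e s u) : ∃ e' s', LeftSpine e' s' t ∧ Tamari s' s := by
  induction h generalizing e s with
  | refl => exact ⟨e, s, hs, .refl⟩
  | tail _ hr ih =>
    obtain ⟨p, hp⟩ := hr
    obtain ⟨e₁, s₁, hs₁, hss₁⟩ := hp.exists_leftSpine hs
    obtain ⟨e₂, s₂, hs₂, hss₂⟩ := ih hs₁
    exact ⟨e₂, s₂, hs₂, hss₂.trans hss₁⟩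

theorem Tamari.exists_rightSpine {t u : BTree} (h : Tamari t u) {d : ℕ} {s : BTree}
    (hs : RightSpine d s t) : ∃ d' s', RightSpine d' s' u ∧ Tamari s s' := by
  induction h with
  | refl => exact ⟨d, s, hs, .refl⟩
  | tail _ hr ih =>
    obtain ⟨p, hp⟩ := hr
    obtain ⟨d₁, s₁, hs₁, hss₁⟩ := ih
    obtain ⟨d₂, s₂, hs₂, hss₂⟩ := hp.exists_rightSpine hs₁
    exact ⟨d₂, s₂, hs₂, hss₁.trans hss₂⟩

inductive BalancedInterval : BTree → BTree → Prop
  | leaf : BalancedInterval leaf leaf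
  | branch {l₀ r₀ l₁ r₁ : BTree} : BalancedInterval l₀ l₁ → BalancedInterval r₀ r₁ →
      r₀.ht ≤ l₀.ht + 1 → l₀.ht ≤ r₀.ht + 1 → BalancedInterval (node l₀ r₀) (node l₁ r₁)
  | rot {a₀ b₀ c₀ a₁ b₁ c₁ : BTree} : BalancedInterval a₀ a₁ → BalancedInterval b₀ b₁ →
      BalancedInterval c₀ c₁ → c₀.ht = a₀.ht → b₀.ht ≤ a₀.ht → a₀.ht ≤ b₀.ht + 1 →
      BalancedInterval (node (node a₀ b₀) c₀) (node a₁ (node b₁ c₁))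

namespace BalancedInterval

variable {t₀ t₁ : BTree}

theorem ht_eq (h : BalancedInterval t₀ t₁) : t₀.ht = t₁.ht := by
  induction h with
  | leaf => rfl
  | branch _ _ _ _ ihl ihr => simp only [ht]; omega
  | rot _ _ _ _ _ _ iha ihb ihc => simp only [ht]; omega

theorem leaves_eq (h : BalancedInterval t₀ t₁) : t₀.leaves = t₁.leaves := by
  induction h with
  | leaf => rfl
  | branch _ _ _ _ ihl ihr => simp only [leaves]; omega
  | rot _ _ _ _ _ _ iha ihb ihc => simp only [leaves]; omega

theorem balanced (h : BalancedInterval t₀ t₁) : Balanced t₀ ∧ Balanced t₁ := by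
  induction h with
  | leaf => exact ⟨trivial, trivial⟩
  | branch hl hr _ _ ihl ihr =>
    have := hl.ht_eq
    have := hr.ht_eq
    exact ⟨balanced_node.2 ⟨by omega, ihl.1, ihr.1⟩, balanced_node.2 ⟨by omega, ihl.2, ihr.2⟩⟩
  | @rot a₀ b₀ c₀ a₁ b₁ c₁ ha hb hc _ _ _ iha ihb ihc =>
    have := ha.ht_eq
    have := hb.ht_eq
    have := hc.ht_eq
    have : (node a₀ b₀).ht = a₀.ht + 1 := by simp only [ht]; omega
    have : (node b₁ c₁).ht = c₁.ht + 1 := by simp only [ht]; omega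
    exact ⟨balanced_node.2 ⟨by omega, balanced_node.2 ⟨by omega, iha.1, ihb.1⟩, ihc.1⟩,
      balanced_node.2 ⟨by omega, iha.2, balanced_node.2 ⟨by omega, ihb.2, ihc.2⟩⟩⟩

theorem tamari (h : BalancedInterval t₀ t₁) : Tamari t₀ t₁ := by
  induction h with
  | leaf => exact .refl
  | branch _ _ _ _ ihl ihr => exact ihl.node_congr ihr
  | rot _ _ _ _ _ _ iha ihb ihc =>
    exact .tail ((iha.node_congr ihb).node_congr ihc) ⟨[], .here _ _ _⟩

/-- Some subtree on the left spine of `node l₀ r₀` lies below `l₁`, and `r₀` lies below some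
subtree on the right spine of `node l₁ r₁`; the balance conditions force both subtrees to sit at
depth two, which exhibits a rotation at the root. -/
theorem of_tamari_of_leaves_lt {l₀ r₀ l₁ r₁ : BTree}
    (ih : ∀ s t, s.leaves < (node l₀ r₀).leaves → Balanced s → Balanced t → Tamari s t →
      BalancedInterval s t)
    (h₀ : Balanced (node l₀ r₀)) (h₁ : Balanced (node l₁ r₁))
    (h : Tamari (node l₀ r₀) (node l₁ r₁)) (hlt : l₁.leaves < l₀.leaves) :
    BalancedInterval (node l₀ r₀) (node l₁ r₁) := by
  have hn : l₁.leaves + r₁.leaves = l₀.leaves + r₀.leaves := h.leaves_eq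
  have hb₀ := balanced_node.1 h₀
  have hb₁ := balanced_node.1 h₁
  obtain ⟨e, a₀, hsa, ha⟩ := h.exists_leftSpine ((LeftSpine.refl l₁).step r₁)
  obtain ⟨d, c₁, hsc, hc⟩ := h.exists_rightSpine ((RightSpine.refl r₀).step l₀)
  have hla : l₁.leaves = a₀.leaves := ha.leaves_eq
  have hlc : c₁.leaves = r₀.leaves := hc.leaves_eq
  have hr₀ := one_le_leaves r₀
  have iha := ih a₀ l₁ (by simp only [leaves]; omega) (hsa.balanced h₀) hb₁.2.1 ha
  have ihc := ih r₀ c₁ (by simp only [leaves]; omega) hb₀.2.2 (hsc.balanced h₁) hc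
  have hea := hsa.ht_add_le
  have hdc := hsc.ht_add_le
  have := hb₀.1
  have := hb₁.1
  have := iha.ht_eq
  have := ihc.ht_eq
  simp only [ht] at hea hdc
  have := hsa.two_le (by omega)
  have := hsc.two_le (by omega)
  obtain rfl : e = 2 := by omega
  obtain rfl : d = 2 := by omega
  obtain ⟨b₀, rfl⟩ := hsa.exists_eq_node
  obtain ⟨b₁, rfl⟩ := hsc.exists_eq_node
  simp only [leaves] at hn hlt
  have ihb := ih b₀ b₁ (by simp only [leaves]; omega) (balanced_node.1 hb₀.2.1).2.2
    (balanced_node.1 hb₁.2.2).2.1 (h.middle_of_rotation hla.symm hlc.symm)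
  have := ihb.ht_eq
  have := (balanced_node.1 hb₀.2.1).1
  have := (balanced_node.1 hb₁.2.2).1
  simp only [ht] at hb₀ hb₁
  exact .rot iha ihb ihc (by omega) (by omega) (by omega)

theorem of_tamari (h₀ : Balanced t₀) (h₁ : Balanced t₁) (h : Tamari t₀ t₁) :
    BalancedInterval t₀ t₁ := by
  induction hn : t₀.leaves using Nat.strong_induction_on generalizing t₀ t₁ with
  | _ n ih =>
  subst hn
  have hlv := h.leaves_eq
  cases t₀ with
  | leaf =>
    cases t₁ with
    | leaf => exact .leaf
    | node l r => exact absurd hlv (one_lt_leaves_node l r).ne'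
  | node l₀ r₀ =>
    cases t₁ with
    | leaf => exact absurd hlv.symm (one_lt_leaves_node l₀ r₀).ne'
    | node l₁ r₁ =>
      have ih' : ∀ s t, s.leaves < (node l₀ r₀).leaves → Balanced s → Balanced t → Tamari s t →
          BalancedInterval s t := fun s t hs hs₀ hs₁ hst => ih _ hs hs₀ hs₁ hst rfl
      rcases lt_trichotomy l₁.leaves l₀.leaves with hlt | heq | hgt
      · exact of_tamari_of_leaves_lt ih' h₀ h₁ h hlt
      · obtain ⟨hl, hr⟩ := h.of_node_node heq.symm
        obtain ⟨hb, hl₀, hr₀⟩ := balanced_node.1 h₀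
        obtain ⟨-, hl₁, hr₁⟩ := balanced_node.1 h₁
        have := one_le_leaves l₀
        have := one_le_leaves r₀
        exact .branch (ih' _ _ (by simp only [leaves]; omega) hl₀ hl₁ hl)
          (ih' _ _ (by simp only [leaves]; omega) hr₀ hr₁ hr) hb.1 hb.2
      · exact absurd h.leftLeaves_le (by simp only [leftLeaves]; omega)

end BalancedInterval

theorem balancedInterval_iff {t₀ t₁ : BTree} :
    BalancedInterval t₀ t₁ ↔ Balanced t₀ ∧ Balanced t₁ ∧ Tamari t₀ t₁ :=
  ⟨fun h => ⟨h.balanced.1, h.balanced.2, h.tamari⟩, fun ⟨h₀, h₁, h⟩ => .of_tamari h₀ h₁ h⟩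

open Finset

def nodePair (P Q : BTree × BTree) : BTree × BTree := (node P.1 Q.1, node P.2 Q.2)

def rotPair (P Q R : BTree × BTree) : BTree × BTree :=
  (node (node P.1 Q.1) R.1, node P.2 (node Q.2 R.2))

theorem nodePair_injective2 : Function.Injective2 nodePair := by
  rintro ⟨_, _⟩ ⟨_, _⟩ ⟨_, _⟩ ⟨_, _⟩ h
  simp_all [nodePair]

theorem rotPair_injective2 : Function.Injective2 fun PQ : (BTree × BTree) × (BTree × BTree) =>
    rotPair PQ.1 PQ.2 := by
  rintro ⟨⟨_, _⟩, ⟨_, _⟩⟩ ⟨⟨_, _⟩, ⟨_, _⟩⟩ ⟨_, _⟩ ⟨_, _⟩ h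
  simp_all [rotPair]

/- The three components mirror the substitution `x ↦ x² + 2xy + z, y ↦ x, z ↦ x³ + x²y`:
`xLevel k` consists of the balanced intervals of height `k`, `yLevel k` of those of height
`k - 1`, and `zLevel k` of those of height `k + 1` built by `BalancedInterval.rot`. -/
def levels : ℕ → Finset (BTree × BTree) × Finset (BTree × BTree) × Finset (BTree × BTree)
  | 0 => ({(leaf, leaf)}, ∅, ∅)
  | k + 1 =>
    match levels k with
    | (x, y, z) => (image₂ nodePair x (x ∪ y) ∪ image₂ nodePair y x ∪ z, x,
        image₂ (fun PQ => rotPair PQ.1 PQ.2) (x ×ˢ (x ∪ y)) x)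

def xLevel (k : ℕ) : Finset (BTree × BTree) := (levels k).1

def yLevel (k : ℕ) : Finset (BTree × BTree) := (levels k).2.1

def zLevel (k : ℕ) : Finset (BTree × BTree) := (levels k).2.2

theorem xLevel_succ (k : ℕ) :
    xLevel (k + 1) = image₂ nodePair (xLevel k) (xLevel k ∪ yLevel k) ∪
      image₂ nodePair (yLevel k) (xLevel k) ∪ zLevel k := rfl

theorem yLevel_succ (k : ℕ) : yLevel (k + 1) = xLevel k := rfl

theorem zLevel_succ (k : ℕ) :
    zLevel (k + 1) =
      image₂ (fun PQ => rotPair PQ.1 PQ.2) (xLevel k ×ˢ (xLevel k ∪ yLevel k)) (xLevel k) := rfl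

theorem levels_spec (k : ℕ) :
    (∀ P ∈ xLevel k, BalancedInterval P.1 P.2 ∧ P.1.ht = k) ∧
    (∀ P ∈ yLevel k, BalancedInterval P.1 P.2 ∧ P.1.ht + 1 = k) ∧
    (∀ P ∈ zLevel k, BalancedInterval P.1 P.2 ∧ P.1.ht = k + 1 ∧
      P.2.leftLeaves < P.1.leftLeaves) := by
  induction k with
  | zero => simp [xLevel, yLevel, zLevel, levels, BalancedInterval.leaf, ht]
  | succ k ih =>
    obtain ⟨hx, hy, hz⟩ := ih
    have hxy : ∀ Q, Q ∈ xLevel k ∨ Q ∈ yLevel k →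
        BalancedInterval Q.1 Q.2 ∧ Q.1.ht ≤ k ∧ k ≤ Q.1.ht + 1 := by
      rintro Q (hQ | hQ)
      · exact ⟨(hx Q hQ).1, by have := (hx Q hQ).2; omega⟩
      · exact ⟨(hy Q hQ).1, by have := (hy Q hQ).2; omega⟩
    refine ⟨?_, fun P hP => ⟨(hx P hP).1, congrArg (· + 1) (hx P hP).2⟩, ?_⟩
    · simp only [xLevel_succ, mem_union, mem_image₂]
      rintro _ ((⟨P, hP, Q, hQ, rfl⟩ | ⟨P, hP, Q, hQ, rfl⟩) | hP)
      · obtain ⟨hP, hPk⟩ := hx P hP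
        obtain ⟨hQ, hQk⟩ := hxy Q hQ
        exact ⟨.branch hP hQ (by omega) (by omega), by simp only [nodePair, ht]; omega⟩
      · obtain ⟨hP, hPk⟩ := hy P hP
        obtain ⟨hQ, hQk⟩ := hx Q hQ
        exact ⟨.branch hP hQ (by omega) (by omega), by simp only [nodePair, ht]; omega⟩
      · exact ⟨(hz _ hP).1, (hz _ hP).2.1⟩
    · simp only [zLevel_succ, mem_image₂, mem_product, mem_union]
      rintro _ ⟨PQ, ⟨hP, hQ⟩, R, hR, rfl⟩
      obtain ⟨hP, hPk⟩ := hx PQ.1 hP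
      obtain ⟨hQ, hQk⟩ := hxy PQ.2 hQ
      obtain ⟨hR, hRk⟩ := hx R hR
      have := hP.leaves_eq
      have := one_le_leaves PQ.2.1
      refine ⟨.rot hP hQ hR (by omega) (by omega) (by omega), ?_, ?_⟩
      · simp only [rotPair, ht]; omega
      · simp only [rotPair, leftLeaves, leaves]; omega

theorem disjoint_xLevel_yLevel (k : ℕ) : Disjoint (xLevel k) (yLevel k) :=
  disjoint_left.2 fun P hx hy => by
    have := ((levels_spec k).1 P hx).2
    have := ((levels_spec k).2.1 P hy).2
    omega

theorem mem_xLevel_union_yLevel {P : BTree × BTree} (hP : P ∈ xLevel P.1.ht) {k : ℕ}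
    (hk : P.1.ht ≤ k) (hk' : k ≤ P.1.ht + 1) : P ∈ xLevel k ∪ yLevel k := by
  obtain rfl | rfl : k = P.1.ht ∨ k = P.1.ht + 1 := by omega
  · exact mem_union_left _ hP
  · exact mem_union_right _ hP

theorem BalancedInterval.mem_xLevel {t₀ t₁ : BTree} (h : BalancedInterval t₀ t₁) :
    (t₀, t₁) ∈ xLevel t₀.ht := by
  induction h with
  | leaf => simp [xLevel, levels, ht]
  | @branch l₀ r₀ l₁ r₁ _ _ h₁ h₂ ihl ihr =>
    rcases le_or_gt r₀.ht l₀.ht with hle | hlt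
    · rw [show (node l₀ r₀).ht = l₀.ht + 1 by simp only [ht]; omega, xLevel_succ]
      exact mem_union_left _ (mem_union_left _
        (mem_image₂_of_mem ihl (mem_xLevel_union_yLevel ihr hle h₂)))
    · have hr : r₀.ht = l₀.ht + 1 := by omega
      rw [show (node l₀ r₀).ht = l₀.ht + 1 + 1 by simp only [ht]; omega, xLevel_succ]
      have hl : (l₀, l₁) ∈ yLevel (l₀.ht + 1) := ihl
      exact mem_union_left _ (mem_union_right _ (mem_image₂_of_mem hl (hr ▸ ihr)))
  | @rot a₀ b₀ c₀ a₁ b₁ c₁ _ _ _ hca hba hab iha ihb ihc =>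
    have hht : (node (node a₀ b₀) c₀).ht = a₀.ht + 1 + 1 := by simp only [ht]; omega
    have hPQ : ((a₀, a₁), (b₀, b₁)) ∈ xLevel a₀.ht ×ˢ (xLevel a₀.ht ∪ yLevel a₀.ht) :=
      mem_product.2 ⟨iha, mem_xLevel_union_yLevel ihb hba hab⟩
    rw [hht, xLevel_succ, zLevel_succ]
    exact mem_union_right _ (mem_image₂_of_mem hPQ (hca ▸ ihc))

theorem mem_xLevel_iff {P : BTree × BTree} {k : ℕ} :
    P ∈ xLevel k ↔ BalancedInterval P.1 P.2 ∧ P.1.ht = k :=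
  ⟨(levels_spec k).1 P, fun ⟨h, hk⟩ => hk ▸ h.mem_xLevel⟩

open MvPolynomial

section GeneratingFunction

variable {R : Type*} [CommSemiring R] (x : R)

def genFun (S : Finset (BTree × BTree)) : R := ∑ P ∈ S, x ^ P.1.leaves

theorem sum_pow_image₂ {α β γ : Type*} [DecidableEq γ] {f : α → β → γ}
    (hf : Function.Injective2 f) {a : α → ℕ} {b : β → ℕ} {c : γ → ℕ}
    (hc : ∀ p q, c (f p q) = a p + b q) (s : Finset α) (t : Finset β) :
    ∑ r ∈ image₂ f s t, x ^ c r = (∑ p ∈ s, x ^ a p) * ∑ q ∈ t, x ^ b q := by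
  rw [← image_uncurry_product, sum_image hf.uncurry.injOn, sum_product, sum_mul_sum]
  simp only [Function.uncurry_apply_pair, hc, pow_add]

theorem genFun_union {S T : Finset (BTree × BTree)} (h : Disjoint S T) :
    genFun x (S ∪ T) = genFun x S + genFun x T :=
  sum_union h

theorem genFun_image₂_nodePair (S T : Finset (BTree × BTree)) :
    genFun x (image₂ nodePair S T) = genFun x S * genFun x T :=
  sum_pow_image₂ x nodePair_injective2 (fun _ _ => rfl) S T

theorem genFun_image₂_rotPair (S T U : Finset (BTree × BTree)) :
    genFun x (image₂ (fun PQ => rotPair PQ.1 PQ.2) (S ×ˢ T) U) =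
      genFun x S * genFun x T * genFun x U := by
  rw [genFun, sum_pow_image₂ x rotPair_injective2 (a := fun PQ => PQ.1.1.leaves + PQ.2.1.leaves)
    (fun _ _ => rfl)]
  congr 1
  rw [sum_product, genFun, genFun, sum_mul_sum]
  simp only [pow_add]

theorem genFun_xLevel_succ (k : ℕ) :
    genFun x (xLevel (k + 1)) =
      genFun x (xLevel k) * (genFun x (xLevel k) + genFun x (yLevel k)) +
        genFun x (yLevel k) * genFun x (xLevel k) + genFun x (zLevel k) := by
  obtain ⟨hx, hy, hz⟩ := levels_spec k
  -- the root of an interval built by `nodePair` is not rotated, unlike those in `zLevel k`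
  have hnodes : Disjoint (image₂ nodePair (xLevel k) (xLevel k ∪ yLevel k) ∪
      image₂ nodePair (yLevel k) (xLevel k)) (zLevel k) := by
    refine disjoint_left.2 fun P hP hPz => (hz P hPz).2.2.ne ?_
    simp only [mem_union, mem_image₂] at hP
    rcases hP with ⟨P, hP, Q, -, rfl⟩ | ⟨P, hP, Q, -, rfl⟩
    · exact (hx P hP).1.leaves_eq.symm
    · exact (hy P hP).1.leaves_eq.symm
  have hxy := disjoint_xLevel_yLevel k
  have hnode : Disjoint (image₂ nodePair (xLevel k) (xLevel k ∪ yLevel k))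
      (image₂ nodePair (yLevel k) (xLevel k)) := by
    simp only [disjoint_left, mem_image₂]
    rintro _ ⟨P, hP, Q, -, rfl⟩ ⟨P', hP', Q', -, h⟩
    exact disjoint_left.1 hxy hP ((nodePair_injective2 h).1 ▸ hP')
  rw [xLevel_succ, genFun_union x hnodes, genFun_union x hnode, genFun_image₂_nodePair,
    genFun_image₂_nodePair, genFun_union x hxy]

theorem genFun_zLevel_succ (k : ℕ) :
    genFun x (zLevel (k + 1)) =
      genFun x (xLevel k) * (genFun x (xLevel k) + genFun x (yLevel k)) * genFun x (xLevel k) := by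
  rw [zLevel_succ, genFun_image₂_rotPair, genFun_union x (disjoint_xLevel_yLevel k)]

def levelWeights (k : ℕ) : Fin 3 → R :=
  ![genFun x (xLevel k), genFun x (yLevel k), genFun x (zLevel k)]

theorem aeval_levelWeights_substitution [Algebra ℕ R] (k : ℕ) :
    (fun j => aeval (levelWeights x k)
      ((![X 0 ^ 2 + 2 * X 0 * X 1 + X 2, X 0, X 0 ^ 3 + X 0 ^ 2 * X 1] :
        Fin 3 → MvPolynomial (Fin 3) ℕ) j)) = levelWeights x (k + 1) := by
  funext j
  fin_cases j <;>
  simp only [levelWeights, Fin.isValue, Fin.zero_eta, Fin.mk_one, Fin.reduceFinMk,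
    Matrix.cons_val, Matrix.cons_val_zero, Matrix.cons_val_one, map_add, map_mul, map_pow,
    aeval_X, aeval_ofNat, genFun_xLevel_succ, genFun_zLevel_succ, yLevel_succ] <;>
  ring

theorem aeval_intSeq [Algebra ℕ R] (k i : ℕ) :
    aeval (levelWeights x k) (intSeq i) = ∑ j ∈ range (i + 1), genFun x (xLevel (k + j)) := by
  induction i generalizing k with
  | zero => simp [intSeq, levelWeights]
  | succ i ih =>
    rw [intSeq, map_add, aeval_X, aeval_bind₁, aeval_levelWeights_substitution, ih,
      sum_range_succ' _ (i + 1)]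
    simp [levelWeights, add_comm, add_left_comm]

end GeneratingFunction

theorem bind₁_intSeq_eq_sum_genFun (i : ℕ) :
    bind₁ ![X 0, 0, 0] (intSeq i) =
      ∑ j ∈ range (i + 1), genFun (X 0 : MvPolynomial ℕ ℕ) (xLevel j) := by
  have : (![X 0, 0, 0] : Fin 3 → MvPolynomial ℕ ℕ) = levelWeights (X 0) 0 := by
    funext j
    fin_cases j <;> simp [levelWeights, genFun, xLevel, yLevel, zLevel, levels, leaves]
  rw [← aeval_eq_bind₁, this, aeval_intSeq]
  simp

theorem coeff_genFun {σ R : Type*} [CommSemiring R] [DecidableEq σ] (i : σ) (n : ℕ)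
    (S : Finset (BTree × BTree)) :
    coeff (Finsupp.single i n) (genFun (X i : MvPolynomial σ R) S) =
      #{P ∈ S | P.1.leaves = n} := by
  simp [genFun, coeff_sum, coeff_X_pow, sum_boole, (Finsupp.single_injective i).eq_iff]

theorem sum_card_xLevel_eq_natCard (n i : ℕ) (hi : n ≤ i) :
    ∑ j ∈ range (i + 1), #{P ∈ xLevel j | P.1.leaves = n} =
      Nat.card {P : BTree × BTree //
        Balanced P.1 ∧ Balanced P.2 ∧ P.1.leaves = n ∧ P.2.leaves = n ∧ Tamari P.1 P.2} := by
  rw [← card_biUnion, ← Nat.card_eq_finsetCard]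
  · refine Nat.card_congr (Equiv.subtypeEquivRight fun P => ?_)
    simp only [mem_biUnion, mem_range, mem_filter, mem_xLevel_iff, balancedInterval_iff]
    constructor
    · rintro ⟨j, -, ⟨⟨h₀, h₁, h⟩, -⟩, hn⟩
      exact ⟨h₀, h₁, hn, h.leaves_eq.trans hn, h⟩
    · rintro ⟨h₀, h₁, hn, -, h⟩
      exact ⟨P.1.ht, by have := ht_lt_leaves P.1; omega, ⟨⟨h₀, h₁, h⟩, rfl⟩, hn⟩
  · intro j _ j' _ hjj'
    simp only [Function.onFun, disjoint_left, mem_filter, mem_xLevel_iff]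
    rintro P ⟨⟨-, rfl⟩, -⟩ ⟨⟨-, h⟩, -⟩
    exact hjj' h

open MvPolynomial in
theorem intSeq_coeff_eventually_counts_intervals_general (n : ℕ) :
    ∃ N : ℕ, ∀ i ≥ N,
      coeff (Finsupp.single 0 n) (bind₁ ![X 0, 0, 0] (intSeq i)) =
        Nat.card {P : BTree × BTree //
          Balanced P.1 ∧ Balanced P.2 ∧
          P.1.leaves = n ∧ P.2.leaves = n ∧ Tamari P.1 P.2} := by
  refine ⟨n, fun i hi => ?_⟩
  simp only [bind₁_intSeq_eq_sum_genFun, coeff_sum, coeff_genFun, Nat.cast_id]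
  exact sum_card_xLevel_eq_natCard n i hi

open MvPolynomial in
/-- For every `n ≥ 1`, the coefficient of `x^n` in `A_i(x, 0, 0)` is eventually
constant as `i → ∞`, and its eventual value is the number of balanced tree
intervals `[T0, T1]` of the Tamari lattice with `n` leaves, i.e. the number of
pairs `(T0, T1)` of balanced trees with `n` leaves such that `T0 ≼ T1`. -/
theorem intSeq_coeff_eventually_counts_intervals (n : ℕ) (hn : 1 ≤ n) :
    ∃ N : ℕ, ∀ i ≥ N,
      coeff (Finsupp.single 0 n) (bind₁ ![X 0, 0, 0] (intSeq i)) =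
        Nat.card {P : BTree × BTree //
          Balanced P.1 ∧ Balanced P.2 ∧
          P.1.leaves = n ∧ P.2.leaves = n ∧ Tamari P.1 P.2} :=
  intSeq_coeff_eventually_counts_intervals_general n

end BTree
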